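/- arXiv:cs/0205012 — 2 statements merged into one kernel-verified Lean document; each statement's English description precedes it below -/
import Mathlib

section
/- Let groups have sizes g_j ≥ 1, probabilities p_j ≥ 0 with Σ_j p_j g_j = 1, and costs c_j ≥ 0, and let τ*_j ≥ 1 for all j. Then Σ_j ( p_j g_j(g_j+1)/2 · τ*_j + c_j/τ*_j ) − 1/2 ≤ max_j (1 + 1/g_j) · Σ_j ( p_j g_j²/2 · τ*_j + c_j/τ*_j ). -/
/-- Performance ratio of the group round-robin algorithm: its expected cost is at
most `max_j (1+1/g_j)` times the Ammar–Wong lower bound value at `τ*`. -/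
theorem stmt5 (q : ℕ) (hq : 0 < q) (g p c τ : Fin q → ℝ)
    (hg : ∀ j, 1 ≤ g j) (hp : ∀ j, 0 ≤ p j) (hc : ∀ j, 0 ≤ c j)
    (hsum : ∑ j, p j * g j = 1) (hτ : ∀ j, 1 ≤ τ j) :
    (∑ j, (p j * (g j * (g j + 1)) / 2 * τ j + c j / τ j)) - 1 / 2 ≤
      (Finset.univ.sup'
        (by have : Nonempty (Fin q) := Fin.pos_iff_nonempty.mp hq
            exact Finset.univ_nonempty)
        (fun j => 1 + 1 / g j)) *
        ∑ j, (p j * g j ^ 2 / 2 * τ j + c j / τ j) := by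
  have hne : (Finset.univ : Finset (Fin q)).Nonempty := by
    have : Nonempty (Fin q) := Fin.pos_iff_nonempty.mp hq
    exact Finset.univ_nonempty
  set M := Finset.univ.sup' hne (fun j => 1 + 1 / g j) with hM
  have key : (∑ j, (p j * (g j * (g j + 1)) / 2 * τ j + c j / τ j)) ≤
      M * ∑ j, (p j * g j ^ 2 / 2 * τ j + c j / τ j) := by
    rw [Finset.mul_sum]
    apply Finset.sum_le_sum
    intro j _
    have hgj : (0:ℝ) < g j := lt_of_lt_of_le one_pos (hg j)
    have hτj : (0:ℝ) < τ j := lt_of_lt_of_le one_pos (hτ j)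
    have hMj : 1 + 1 / g j ≤ M := Finset.le_sup' (fun j => 1 + 1 / g j) (Finset.mem_univ j)
    have hM1 : 1 ≤ M := le_trans (by
      have : 0 < 1 / g j := by positivity
      linarith) hMj
    have h1 : p j * (g j * (g j + 1)) / 2 * τ j ≤ M * (p j * g j ^ 2 / 2 * τ j) := by
      have heq : p j * (g j * (g j + 1)) / 2 * τ j
          = (1 + 1 / g j) * (p j * g j ^ 2 / 2 * τ j) := by
        field_simp
      rw [heq]
      have hnn : 0 ≤ p j * g j ^ 2 / 2 * τ j :=
        mul_nonneg (div_nonneg (mul_nonneg (hp j) (sq_nonneg _)) (by norm_num)) hτj.le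
      exact mul_le_mul_of_nonneg_right hMj hnn
    have h2 : c j / τ j ≤ M * (c j / τ j) := by
      have hnn : 0 ≤ c j / τ j := div_nonneg (hc j) hτj.le
      nlinarith
    calc p j * (g j * (g j + 1)) / 2 * τ j + c j / τ j
        ≤ M * (p j * g j ^ 2 / 2 * τ j) + M * (c j / τ j) := add_le_add h1 h2
      _ = M * (p j * g j ^ 2 / 2 * τ j + c j / τ j) := by ring
  linarith
end

section
/- Stretching lemma: let S be a periodic schedule on W channels, y a positive integer, ε > 0, and κ ≥ (y² + y)/ε − y. Let S′_x be the schedule obtained from S by inserting y consecutive empty slots on all channels just before time slots x, x+κ, x+2κ, …, where x is chosen uniformly at random from {1,…,κ}. Then E_x[ERT(S′_x)] ≤ (1+ε)·ERT(S). -/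
/-- Time map for inserting `y` empty slots just before times `x, x+κ, x+2κ, …`:
`stretchTime x κ y t` is the original slot shown at new time `t`, or `none` if
`t` is one of the inserted empty slots. -/
def stretchTime (x κ y t : ℕ) : Option ℕ :=
  if t < x then some t
  else
    if (t - x) % (κ + y) < y then none
    else some (x + ((t - x) / (κ + y)) * κ + ((t - x) % (κ + y) - y))

/-- Wait from time `t` for message `i` in a `W`-channel periodic schedule. -/
noncomputable def waitPW (W m : ℕ) (S : ℕ → Fin W → Option (Fin m))
    (t : ℕ) (i : Fin m) : ℕ :=
  sInf {d : ℕ | 0 < d ∧ ∃ k, S (t + d) k = some i}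

/-- Expected response time of a `W`-channel periodic schedule over one period `T`. -/
noncomputable def ERTpW (T W m : ℕ) (S : ℕ → Fin W → Option (Fin m))
    (p : Fin m → ℝ) : ℝ :=
  (∑ t ∈ Finset.range T, ∑ i, p i * (waitPW W m S t i : ℝ)) / T

namespace StretchAux


def stg (κ x u : ℕ) : ℕ := (u + κ - x) / κ

def stf (κ y x u : ℕ) : ℕ := u + y * stg κ x u

lemma stg_lt (hκ : 0 < κ) (h : u < x) : stg κ x u = 0 :=
  Nat.div_eq_of_lt (by omega)

lemma stg_ge (hκ : 0 < κ) (h : x ≤ u) : stg κ x u = (u - x) / κ + 1 := by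
  unfold stg
  rw [show u + κ - x = (u - x) + κ by omega, Nat.add_div_right _ hκ]

lemma stg_mono (κ x : ℕ) {u v : ℕ} (h : u ≤ v) : stg κ x u ≤ stg κ x v :=
  Nat.div_le_div_right (by omega)

lemma stg_add_le (hκ : 0 < κ) (hx : x ≤ κ) (u w : ℕ) :
    stg κ x (u + w) ≤ stg κ x u + w := by
  unfold stg
  rw [show u + w + κ - x = (u + κ - x) + w by omega]
  calc (u + κ - x + w) / κ ≤ (u + κ - x + w * κ) / κ :=
        Nat.div_le_div_right (by nlinarith)
    _ = (u + κ - x) / κ + w := Nat.add_mul_div_right _ _ hκ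

lemma sum_div_range (hκ : 0 < κ) : ∀ u, ∑ j ∈ Finset.range κ, (u + j) / κ = u := by
  intro u; induction u with
  | zero =>
    apply Finset.sum_eq_zero; intro j hj
    simp only [Finset.mem_range] at hj
    exact Nat.div_eq_of_lt (by omega)
  | succ u ih =>
    have h1 : ∑ j ∈ Finset.range κ, (u + 1 + j) / κ
        = ∑ j ∈ Finset.range κ, (u + (j + 1)) / κ := by
      apply Finset.sum_congr rfl; intro j _; congr 1; omega
    have h2 : ∑ j ∈ Finset.range (κ + 1), (u + j) / κ
        = ∑ j ∈ Finset.range κ, (u + (j + 1)) / κ + (u + 0) / κ :=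
      Finset.sum_range_succ' _ _
    have h3 : ∑ j ∈ Finset.range (κ + 1), (u + j) / κ
        = ∑ j ∈ Finset.range κ, (u + j) / κ + (u + κ) / κ :=
      Finset.sum_range_succ _ _
    have h4 : (u + κ) / κ = u / κ + 1 := Nat.add_div_right _ hκ
    have h5 : (u + 0) / κ = u / κ := by norm_num
    omega

lemma sum_stg (hκ : 0 < κ) (u : ℕ) : ∑ x ∈ Finset.Icc 1 κ, stg κ x u = u := by
  conv_rhs => rw [← sum_div_range hκ u]
  refine Finset.sum_nbij' (fun x => κ - x) (fun j => κ - j) ?_ ?_ ?_ ?_ ?_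
  · intro a ha; simp only [Finset.mem_Icc] at ha; simp only [Finset.mem_range]; omega
  · intro a ha; simp only [Finset.mem_range] at ha; simp only [Finset.mem_Icc]; omega
  · intro a ha; simp only [Finset.mem_Icc] at ha; omega
  · intro a ha; simp only [Finset.mem_range] at ha; omega
  · intro a ha; simp only [Finset.mem_Icc] at ha
    unfold stg; congr 1; omega

lemma stf_zero (hx : 1 ≤ x) (hκ : 0 < κ) : stf κ y x 0 = 0 := by
  unfold stf; rw [stg_lt hκ hx]; omega

lemma stf_mono (κ y x : ℕ) : Monotone (stf κ y x) := by
  intro u v h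
  unfold stf
  have := stg_mono κ x h
  nlinarith

lemma stf_strictMono (κ y x : ℕ) : StrictMono (stf κ y x) := by
  apply strictMono_nat_of_lt_succ
  intro n
  unfold stf
  have := stg_mono κ x (Nat.le_succ n)
  nlinarith

lemma stretch_stf (hκ : 0 < κ) (hx1 : 1 ≤ x) (s : ℕ) :
    stretchTime x κ y (stf κ y x s) = some s := by
  by_cases hs : s < x
  · have h0 : stf κ y x s = s := by unfold stf; rw [stg_lt hκ hs]; omega
    rw [h0]; simp [stretchTime, hs]
  · push_neg at hs
    have hrκ : (s - x) % κ < κ := Nat.mod_lt _ hκ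
    have hqr : κ * ((s - x) / κ) + (s - x) % κ = s - x := Nat.div_add_mod _ _
    set q := (s - x) / κ with hq
    set r := (s - x) % κ with hr
    have e1 : y * (q + 1) = y * q + y := by ring
    have e2 : q * (κ + y) = κ * q + y * q := by ring
    have e3 : q * κ = κ * q := by ring
    have hfm : stf κ y x s = s + y * (q + 1) := by
      unfold stf; rw [stg_ge hκ hs]
    rw [hfm]
    unfold stretchTime
    rw [if_neg (by omega)]
    have h2 : s + y * (q + 1) - x = q * (κ + y) + (r + y) := by omega
    rw [h2]
    have h3 : (q * (κ + y) + (r + y)) % (κ + y) = r + y := by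
      rw [add_comm, Nat.add_mul_mod_self_right]
      exact Nat.mod_eq_of_lt (by omega)
    have h4 : (q * (κ + y) + (r + y)) / (κ + y) = q := by
      rw [mul_comm q (κ + y), Nat.mul_add_div (by omega), Nat.div_eq_of_lt (by omega)]
      omega
    rw [h3, h4, if_neg (by omega)]
    congr 1
    omega

lemma stf_of_stretch (hκ : 0 < κ) {x t s : ℕ} (h : stretchTime x κ y t = some s) :
    stf κ y x s = t := by
  unfold stretchTime at h
  by_cases ht : t < x
  · rw [if_pos ht] at h
    have hts : t = s := by injection h
    subst hts
    unfold stf; rw [stg_lt hκ ht]; omega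
  · rw [if_neg ht] at h
    push_neg at ht
    by_cases hr : (t - x) % (κ + y) < y
    · rw [if_pos hr] at h; exact absurd h (by simp)
    · rw [if_neg hr] at h
      push_neg at hr
      have hrlt : (t - x) % (κ + y) < κ + y := Nat.mod_lt _ (by omega)
      have hqr : (κ + y) * ((t - x) / (κ + y)) + (t - x) % (κ + y) = t - x :=
        Nat.div_add_mod _ _
      set q := (t - x) / (κ + y) with hq
      set r := (t - x) % (κ + y) with hrdef
      have hs : s = x + q * κ + (r - y) := by injection h; omega
      have hsx : x ≤ s := by omega
      have hdiv : (s - x) / κ = q := by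
        rw [show s - x = κ * q + (r - y) by
          have : q * κ = κ * q := by ring
          omega, Nat.mul_add_div hκ, Nat.div_eq_of_lt (by omega)]
        omega
      unfold stf
      rw [stg_ge hκ hsx, hdiv]
      have e1 : y * (q + 1) = y * q + y := by ring
      have e2 : (κ + y) * q = q * κ + y * q := by ring
      omega

variable {W m κ y x : ℕ} {S : ℕ → Fin W → Option (Fin m)}
  {Sx : ℕ → Fin W → Option (Fin m)}

lemma Sx_some (hκ : 0 < κ) (hx1 : 1 ≤ x)
    (hSx : ∀ t k, Sx t k = (stretchTime x κ y t).elim none (fun s => S s k))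
    {t : ℕ} {k : Fin W} {i : Fin m} :
    Sx t k = some i ↔ ∃ s, stf κ y x s = t ∧ S s k = some i := by
  rw [hSx]
  constructor
  · intro h
    cases hst : stretchTime x κ y t with
    | none => rw [hst] at h; simp at h
    | some s =>
      rw [hst] at h
      exact ⟨s, stf_of_stretch hκ hst, h⟩
  · rintro ⟨s, rfl, hSs⟩
    rw [stretch_stf hκ hx1]
    exact hSs

lemma wait_block (hκ : 0 < κ) (hx1 : 1 ≤ x)
    (hSx : ∀ t k, Sx t k = (stretchTime x κ y t).elim none (fun s => S s k))
    {s t : ℕ} {i : Fin m}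
    (hne : {d : ℕ | 0 < d ∧ ∃ k, S (s + d) k = some i}.Nonempty)
    (ht1 : stf κ y x s ≤ t) (ht2 : t < stf κ y x (s + 1)) :
    waitPW W m Sx t i = stf κ y x (s + waitPW W m S s i) - t := by
  set w := waitPW W m S s i with hw
  have hwmem : w ∈ {d : ℕ | 0 < d ∧ ∃ k, S (s + d) k = some i} := Nat.sInf_mem hne
  obtain ⟨hw0, k0, hk0⟩ := hwmem
  have hmono := stf_strictMono κ y x
  have hfw : stf κ y x (s + 1) ≤ stf κ y x (s + w) := hmono.monotone (by omega)
  set d0 := stf κ y x (s + w) - t with hd0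
  have hd0pos : 0 < d0 := by omega
  have htd0 : t + d0 = stf κ y x (s + w) := by omega
  have hd0mem : d0 ∈ {d : ℕ | 0 < d ∧ ∃ k, Sx (t + d) k = some i} := by
    refine ⟨hd0pos, k0, ?_⟩
    rw [Sx_some hκ hx1 hSx]
    exact ⟨s + w, htd0.symm, hk0⟩
  have hlb : ∀ d ∈ {d : ℕ | 0 < d ∧ ∃ k, Sx (t + d) k = some i}, d0 ≤ d := by
    rintro d ⟨hd, k, hk⟩
    rw [Sx_some hκ hx1 hSx] at hk
    obtain ⟨s', hfs', hSs'⟩ := hk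
    have hss' : s < s' := by
      by_contra hle
      push_neg at hle
      have := hmono.monotone hle
      omega
    have hemem : (s' - s) ∈ {d : ℕ | 0 < d ∧ ∃ k, S (s + d) k = some i} :=
      ⟨by omega, k, by rw [show s + (s' - s) = s' by omega]; exact hSs'⟩
    have hwle : w ≤ s' - s := Nat.sInf_le hemem
    have := hmono.monotone (show s + w ≤ s' by omega)
    omega
  have hnon : {d : ℕ | 0 < d ∧ ∃ k, Sx (t + d) k = some i}.Nonempty := ⟨d0, hd0mem⟩
  have h1 : waitPW W m Sx t i ≤ d0 := Nat.sInf_le hd0mem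
  have h2 : d0 ≤ waitPW W m Sx t i := hlb _ (Nat.sInf_mem hnon)
  omega

lemma wait_empty (hκ : 0 < κ) (hx1 : 1 ≤ x)
    (hSx : ∀ t k, Sx t k = (stretchTime x κ y t).elim none (fun s => S s k))
    {s t : ℕ} {i : Fin m}
    (hne : ¬ {d : ℕ | 0 < d ∧ ∃ k, S (s + d) k = some i}.Nonempty)
    (ht1 : stf κ y x s ≤ t) :
    waitPW W m Sx t i = 0 := by
  have hmono := stf_strictMono κ y x
  have : {d : ℕ | 0 < d ∧ ∃ k, Sx (t + d) k = some i} = ∅ := by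
    rw [Set.eq_empty_iff_forall_notMem]
    rintro d ⟨hd, k, hk⟩
    rw [Sx_some hκ hx1 hSx] at hk
    obtain ⟨s', hfs', hSs'⟩ := hk
    have hss' : s < s' := by
      by_contra hle
      push_neg at hle
      have := hmono.monotone hle
      omega
    exact hne ⟨s' - s, by omega, k, by rw [show s + (s' - s) = s' by omega]; exact hSs'⟩
  unfold waitPW
  rw [this, Nat.sInf_empty]


lemma blocksum_le (hκ : 0 < κ) (hy : 0 < y)
    (S' : ℕ → ℕ → Fin W → Option (Fin m))
    (hS' : ∀ x t k, S' x t k = (stretchTime x κ y t).elim none (fun s => S s k))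
    (s : ℕ) (i : Fin m) :
    ∑ x ∈ Finset.Icc 1 κ,
        ∑ t ∈ Finset.Ico (stf κ y x s) (stf κ y x (s + 1)), waitPW W m (S' x) t i
      ≤ (κ + 2 * y + y ^ 2) * waitPW W m S s i := by
  by_cases hne : {d : ℕ | 0 < d ∧ ∃ k, S (s + d) k = some i}.Nonempty
  · set w := waitPW W m S s i with hw
    have hw1 : 1 ≤ w := (Nat.sInf_mem hne).1
    -- the two counting identities
    have hsumD : ∑ x ∈ Finset.Icc 1 κ, (stg κ x (s + w) - stg κ x s) = w := by
      have he : ∑ x ∈ Finset.Icc 1 κ, (stg κ x s + (stg κ x (s + w) - stg κ x s))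
          = ∑ x ∈ Finset.Icc 1 κ, stg κ x (s + w) := by
        refine Finset.sum_congr rfl fun x _ => ?_
        have := stg_mono κ x (Nat.le_add_right s w)
        omega
      rw [Finset.sum_add_distrib, sum_stg hκ, sum_stg hκ] at he
      omega
    have hsumd : ∑ x ∈ Finset.Icc 1 κ, (stg κ x (s + 1) - stg κ x s) = 1 := by
      have he : ∑ x ∈ Finset.Icc 1 κ, (stg κ x s + (stg κ x (s + 1) - stg κ x s))
          = ∑ x ∈ Finset.Icc 1 κ, stg κ x (s + 1) := by
        refine Finset.sum_congr rfl fun x _ => ?_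
        have := stg_mono κ x (Nat.le_add_right s 1)
        omega
      rw [Finset.sum_add_distrib, sum_stg hκ, sum_stg hκ] at he
      omega
    -- per-x bound
    have hinner : ∀ x ∈ Finset.Icc 1 κ,
        ∑ t ∈ Finset.Ico (stf κ y x s) (stf κ y x (s + 1)), waitPW W m (S' x) t i
          ≤ (w + y * (stg κ x (s + w) - stg κ x s))
            + (y * (stg κ x (s + 1) - stg κ x s)) * ((1 + y) * w) := by
      intro x hx
      simp only [Finset.mem_Icc] at hx
      obtain ⟨hx1, hxκ⟩ := hx
      have hm1 := stg_mono κ x (Nat.le_add_right s w)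
      have hm2 := stg_mono κ x (Nat.le_add_right s 1)
      set Δ := stg κ x (s + w) - stg κ x s with hΔ
      set δ := stg κ x (s + 1) - stg κ x s with hδ
      have hfw : stf κ y x (s + w) = stf κ y x s + (w + y * Δ) := by
        unfold stf
        rw [show stg κ x (s + w) = stg κ x s + Δ by omega]
        ring
      have hf1 : stf κ y x (s + 1) = stf κ y x s + (1 + y * δ) := by
        unfold stf
        rw [show stg κ x (s + 1) = stg κ x s + δ by omega]
        ring
      have hΔw : Δ ≤ w := by
        have := stg_add_le hκ hxκ s w
        omega
      calc ∑ t ∈ Finset.Ico (stf κ y x s) (stf κ y x (s + 1)), waitPW W m (S' x) t i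
          ≤ ∑ _t ∈ Finset.Ico (stf κ y x s) (stf κ y x (s + 1)), (w + y * Δ) := by
            refine Finset.sum_le_sum fun t ht => ?_
            simp only [Finset.mem_Ico] at ht
            rw [wait_block hκ hx1 (hS' x) hne ht.1 ht.2]
            show stf κ y x (s + w) - t ≤ w + y * Δ
            omega
        _ = (stf κ y x (s + 1) - stf κ y x s) * (w + y * Δ) := by
            rw [Finset.sum_const, Nat.card_Ico, smul_eq_mul]
        _ = (1 + y * δ) * (w + y * Δ) := by rw [hf1]; congr 1; omega
        _ ≤ (w + y * Δ) + (y * δ) * ((1 + y) * w) := by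
            nlinarith [mul_le_mul_right hΔw (y * δ * y)]
    -- sum everything
    calc ∑ x ∈ Finset.Icc 1 κ,
          ∑ t ∈ Finset.Ico (stf κ y x s) (stf κ y x (s + 1)), waitPW W m (S' x) t i
        ≤ ∑ x ∈ Finset.Icc 1 κ, ((w + y * (stg κ x (s + w) - stg κ x s))
            + (y * (stg κ x (s + 1) - stg κ x s)) * ((1 + y) * w)) :=
          Finset.sum_le_sum hinner
      _ = (κ + 2 * y + y ^ 2) * w := by
          rw [Finset.sum_add_distrib, Finset.sum_add_distrib, Finset.sum_const,
            Nat.card_Icc]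
          have h1 : ∑ x ∈ Finset.Icc 1 κ, y * (stg κ x (s + w) - stg κ x s)
              = y * w := by rw [← Finset.mul_sum, hsumD]
          have h2 : ∑ x ∈ Finset.Icc 1 κ, y * (stg κ x (s + 1) - stg κ x s) * ((1 + y) * w)
              = y * ((1 + y) * w) := by
            rw [← Finset.sum_mul, ← Finset.mul_sum, hsumd, mul_one]
          rw [h1, h2]
          have e1 : y * ((1 + y) * w) = y * w + y ^ 2 * w := by ring
          have e2 : (κ + 2 * y + y ^ 2) * w = κ * w + 2 * (y * w) + y ^ 2 * w := by ring
          have e3 : (κ + 1 - 1) • w = κ * w := by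
            rw [smul_eq_mul, Nat.add_sub_cancel]
          omega
  · refine le_trans (le_of_eq (Finset.sum_eq_zero fun x hx => Finset.sum_eq_zero fun t ht => ?_))
      (Nat.zero_le _)
    simp only [Finset.mem_Icc] at hx
    simp only [Finset.mem_Ico] at ht
    exact wait_empty hκ hx.1 (hS' x) hne ht.1

lemma sum_range_stf {M : Type*} [AddCommMonoid M] (hκ : 0 < κ) (hx1 : 1 ≤ x)
    (h : ℕ → M) : ∀ n, ∑ t ∈ Finset.range (stf κ y x n), h t
      = ∑ s ∈ Finset.range n, ∑ t ∈ Finset.Ico (stf κ y x s) (stf κ y x (s + 1)), h t := by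
  intro n
  induction n with
  | zero => rw [stf_zero hx1 hκ]; simp
  | succ n ih =>
    rw [Finset.sum_range_succ, ← ih, Finset.range_eq_Ico, Finset.range_eq_Ico]
    exact (Finset.sum_Ico_consecutive h (Nat.zero_le _)
      ((stf_strictMono κ y x).monotone (Nat.le_succ n))).symm

lemma stf_period {T : ℕ} (hκ : 0 < κ) (hx1 : 1 ≤ x) (hxκ : x ≤ κ) (hdvd : κ ∣ T) :
    stf κ y x T = T + T / κ * y := by
  obtain ⟨c, rfl⟩ := hdvd
  have h1 : stg κ x (κ * c) = c := by
    unfold stg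
    rw [show κ * c + κ - x = κ * c + (κ - x) by omega, Nat.mul_add_div hκ,
      Nat.div_eq_of_lt (by omega)]
    omega
  have h2 : κ * c / κ = c := Nat.mul_div_cancel_left c hκ
  unfold stf
  rw [h1, h2]
  ring

end StretchAux


open StretchAux in
/-- Stretching lemma: inserting `y` empty slots on all channels every `κ` slots,
starting at a uniformly random offset `x ∈ {1,…,κ}` with `κ ≥ (y²+y)/ε − y`,
increases the expected response time by a factor at most `(1+ε)` on average. -/
theorem stmt9 (T W m κ y : ℕ) (hT : 0 < T) (hκ : 0 < κ) (hy : 0 < y)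
    (ε : ℝ) (hε : 0 < ε) (hκε : ((y : ℝ) ^ 2 + y) / ε - y ≤ (κ : ℝ))
    (hdvd : κ ∣ T)
    (S : ℕ → Fin W → Option (Fin m)) (hper : ∀ t k, S (t + T) k = S t k)
    (p : Fin m → ℝ) (hp : ∀ i, 0 ≤ p i) (hpsum : ∑ i, p i = 1)
    (S' : ℕ → ℕ → Fin W → Option (Fin m))
    (hS' : ∀ x t k, S' x t k = (stretchTime x κ y t).elim none (fun s => S s k)) :
    (1 / (κ : ℝ)) * ∑ x ∈ Finset.Icc 1 κ, ERTpW (T + (T / κ) * y) W m (S' x) p ≤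
      (1 + ε) * ERTpW T W m S p := by
  have hκR : (0:ℝ) < κ := by exact_mod_cast hκ
  have hTR : (0:ℝ) < T := by exact_mod_cast hT
  have hT'N : 0 < T + T / κ * y := by omega
  have hT'R : (0:ℝ) < ((T + T / κ * y : ℕ) : ℝ) := by exact_mod_cast hT'N
  have hκT' : (κ:ℝ) * ((T + T / κ * y : ℕ) : ℝ) = ((κ:ℝ) + y) * T := by
    have h := Nat.mul_div_cancel' hdvd
    have hN : κ * (T + T / κ * y) = (κ + y) * T := by
      have e : κ * (T + T / κ * y) = κ * T + κ * (T / κ) * y := by ring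
      rw [e, h]; ring
    have := congrArg (Nat.cast : ℕ → ℝ) hN
    push_cast at this ⊢
    linarith
  have hcoef : ((κ:ℝ) + 2*y + y^2) ≤ (1+ε)*((κ:ℝ)+y) := by
    have h2 : ((y:ℝ)^2 + y)/ε ≤ (κ:ℝ) + y := by linarith
    have h1 : ((y:ℝ)^2 + y) ≤ ((κ:ℝ)+y)*ε := (div_le_iff₀ hε).mp h2
    nlinarith
  set Wold : Fin m → ℕ := fun i => ∑ s ∈ Finset.range T, waitPW W m S s i with hWold
  set Wnew : ℕ → Fin m → ℕ :=
    fun x i => ∑ t ∈ Finset.range (T + T / κ * y), waitPW W m (S' x) t i with hWnew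
  have hA : ∀ i, ∑ x ∈ Finset.Icc 1 κ, Wnew x i ≤ (κ + 2*y + y^2) * Wold i := by
    intro i
    have hsplit : ∀ x ∈ Finset.Icc 1 κ, Wnew x i
        = ∑ s ∈ Finset.range T, ∑ t ∈ Finset.Ico (stf κ y x s) (stf κ y x (s+1)),
            waitPW W m (S' x) t i := by
      intro x hx
      simp only [Finset.mem_Icc] at hx
      show ∑ t ∈ Finset.range (T + T / κ * y), waitPW W m (S' x) t i = _
      rw [show T + T / κ * y = stf κ y x T from (stf_period hκ hx.1 hx.2 hdvd).symm]
      exact sum_range_stf hκ hx.1 _ T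
    calc ∑ x ∈ Finset.Icc 1 κ, Wnew x i
        = ∑ x ∈ Finset.Icc 1 κ, ∑ s ∈ Finset.range T,
            ∑ t ∈ Finset.Ico (stf κ y x s) (stf κ y x (s+1)), waitPW W m (S' x) t i :=
          Finset.sum_congr rfl hsplit
      _ = ∑ s ∈ Finset.range T, ∑ x ∈ Finset.Icc 1 κ,
            ∑ t ∈ Finset.Ico (stf κ y x s) (stf κ y x (s+1)), waitPW W m (S' x) t i :=
          Finset.sum_comm
      _ ≤ ∑ s ∈ Finset.range T, (κ + 2*y + y^2) * waitPW W m S s i :=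
          Finset.sum_le_sum fun s _ => blocksum_le hκ hy S' hS' s i
      _ = (κ + 2*y + y^2) * Wold i := (Finset.mul_sum _ _ _).symm
  have hERT' : ∀ x, ERTpW (T + T / κ * y) W m (S' x) p
      = (∑ i, p i * (Wnew x i : ℝ)) / ((T + T / κ * y : ℕ) : ℝ) := by
    intro x
    unfold ERTpW
    congr 1
    rw [Finset.sum_comm]
    refine Finset.sum_congr rfl fun i _ => ?_
    rw [← Finset.mul_sum]
    congr 1
    rw [Nat.cast_sum]
  have hERT : ERTpW T W m S p = (∑ i, p i * (Wold i : ℝ)) / T := by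
    unfold ERTpW
    congr 1
    rw [Finset.sum_comm]
    refine Finset.sum_congr rfl fun i _ => ?_
    rw [← Finset.mul_sum]
    congr 1
    rw [Nat.cast_sum]
  rw [hERT]
  have hWoldnn : ∀ i, (0:ℝ) ≤ (Wold i : ℝ) := fun i => Nat.cast_nonneg _
  calc (1 / (κ : ℝ)) * ∑ x ∈ Finset.Icc 1 κ, ERTpW (T + T / κ * y) W m (S' x) p
      = (∑ x ∈ Finset.Icc 1 κ, ∑ i, p i * (Wnew x i : ℝ)) /
          ((κ:ℝ) * ((T + T / κ * y : ℕ) : ℝ)) := by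
        rw [Finset.sum_congr rfl fun x _ => hERT' x, ← Finset.sum_div]
        field_simp
      _ = (∑ i, p i * ((∑ x ∈ Finset.Icc 1 κ, Wnew x i : ℕ) : ℝ)) /
          ((κ:ℝ) * ((T + T / κ * y : ℕ) : ℝ)) := by
        congr 1
        rw [Finset.sum_comm]
        refine Finset.sum_congr rfl fun i _ => ?_
        rw [← Finset.mul_sum, Nat.cast_sum]
      _ ≤ ((1+ε) * ((κ:ℝ)+y) * ∑ i, p i * (Wold i : ℝ)) /
          ((κ:ℝ) * ((T + T / κ * y : ℕ) : ℝ)) := by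
        apply div_le_div_of_nonneg_right ?_ (by positivity)
        rw [Finset.mul_sum]
        refine Finset.sum_le_sum fun i _ => ?_
        have c1 : ((∑ x ∈ Finset.Icc 1 κ, Wnew x i : ℕ) : ℝ)
            ≤ ((κ:ℝ) + 2*y + y^2) * (Wold i : ℝ) := by
          have := hA i
          have h' : ((∑ x ∈ Finset.Icc 1 κ, Wnew x i : ℕ) : ℝ)
              ≤ (((κ + 2*y + y^2) * Wold i : ℕ) : ℝ) := by exact_mod_cast this
          calc ((∑ x ∈ Finset.Icc 1 κ, Wnew x i : ℕ) : ℝ)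
              ≤ (((κ + 2*y + y^2) * Wold i : ℕ) : ℝ) := h'
            _ = ((κ:ℝ) + 2*y + y^2) * (Wold i : ℝ) := by push_cast; ring
        calc p i * ((∑ x ∈ Finset.Icc 1 κ, Wnew x i : ℕ) : ℝ)
            ≤ p i * (((κ:ℝ) + 2*y + y^2) * (Wold i : ℝ)) :=
              mul_le_mul_of_nonneg_left c1 (hp i)
          _ ≤ p i * ((1+ε) * ((κ:ℝ)+y) * (Wold i : ℝ)) :=
              mul_le_mul_of_nonneg_left
                (mul_le_mul_of_nonneg_right hcoef (hWoldnn i)) (hp i)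
          _ = (1+ε) * ((κ:ℝ)+y) * (p i * (Wold i : ℝ)) := by ring
      _ = (1 + ε) * ((∑ i, p i * (Wold i : ℝ)) / T) := by
        rw [hκT']
        field_simp
end
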